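/- For every w ∈ (−1,1) with w ≠ 0, the two middle branches of the piecewise formula for Φ agree at ξ = 1/(1+|w|): 1 + (6/π²)·[F(1/(1+|w|), w) − F(1/2, w) − 1] = (6/π²)·[G(1/(1+|w|), w) − G(1/(1−|w|), w)]. -/

import Mathlib

/-!
Write `s = |w|`. After expanding `Ψ`, the dilogarithm values `Li₂((1-s)/(1+s))` coming from
`Ψ((1-s)/(1+s))` and `Ψ((1+s)/(1-s))` cancel, and the values `Li₂((1±s)/2)` coming from `F(1/2, w)`
combine by Euler's reflection formula `Li₂(x) + Li₂(1-x) + log x · log(1-x) = π²/6`; what remains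
is an identity between logarithms. The reflection formula holds because its left side has zero
derivative on `(0,1)` and tends to `Li₂(0) + Li₂(1) = ζ(2)` as `x → 0⁺`.
-/

open Real Set

/-- The dilogarithm `Li₂(x) = ∑_{k≥1} x^k / k²`. -/
noncomputable def Li2 (x : ℝ) : ℝ := ∑' k : ℕ, x ^ (k + 1) / ((k : ℝ) + 1) ^ 2

noncomputable def Ψ (a : ℝ) : ℝ :=
  if a < 1 then
    -Li2 a + (1 - a) * Real.log (a⁻¹ - 1) + Real.log a - (1 / 2) * (Real.log a) ^ 2 + π ^ 2 / 6
  else if a = 1 then 0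
  else Li2 a⁻¹ - (a - 1) * Real.log (1 - a⁻¹) + Real.log a - π ^ 2 / 6

noncomputable def F (ξ w : ℝ) : ℝ :=
  Ψ (ξ * (1 + |w|)) + Ψ (ξ * (1 - |w|)) - 2 * Real.log ξ
    + 2 * (1 + |w| * Real.log ((1 - |w|) / (1 + |w|))) * ξ

noncomputable def G (ξ w : ℝ) : ℝ :=
  Ψ (ξ * (1 + |w|)) - Real.log ξ
    + (1 - |w| + 2 * |w| * Real.log ((2 * |w|) / (1 + |w|))) * ξ

open Filter Topology

lemma summable_one_div_nat_add_one_sq : Summable fun k : ℕ => 1 / ((k : ℝ) + 1) ^ 2 := by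
  simpa using (summable_nat_add_iff 1).mpr (Real.summable_one_div_nat_pow.mpr one_lt_two)

lemma norm_Li2_term_le {x : ℝ} (hx : |x| ≤ 1) (k : ℕ) :
    ‖x ^ (k + 1) / ((k : ℝ) + 1) ^ 2‖ ≤ 1 / ((k : ℝ) + 1) ^ 2 := by
  rw [norm_div, norm_pow, Real.norm_eq_abs, norm_of_nonneg (by positivity)]
  gcongr
  exact pow_le_one₀ (abs_nonneg x) hx

lemma Li2_zero : Li2 0 = 0 := by simp [Li2]

lemma Li2_one : Li2 1 = π ^ 2 / 6 := by
  have h := (hasSum_nat_add_iff' (f := fun n : ℕ => (1 : ℝ) / (n : ℝ) ^ 2) 1).mpr hasSum_zeta_two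
  simpa [Li2] using h.tsum_eq

lemma continuousOn_Li2 : ContinuousOn Li2 (Icc (-1) 1) :=
  (tendstoUniformlyOn_tsum summable_one_div_nat_add_one_sq fun k x hx =>
    norm_Li2_term_le (abs_le.mpr hx) k).continuousOn
    (Frequently.of_forall fun _ => by fun_prop)

lemma hasDerivAt_Li2 {x : ℝ} (hx : |x| < 1) (hx0 : x ≠ 0) :
    HasDerivAt Li2 (-log (1 - x) / x) x := by
  set r := (1 + |x|) / 2
  have hr : |x| < r := by simp only [r]; linarith
  have hr1 : r < 1 := by simp only [r]; linarith
  have hterm : ∀ (n : ℕ) (y : ℝ), HasDerivAt (fun z => z ^ (n + 1) / ((n : ℝ) + 1) ^ 2)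
      (y ^ n / ((n : ℝ) + 1)) y := fun n y => by
    refine ((hasDerivAt_pow (n + 1) y).div_const _).congr_deriv ?_
    push_cast
    field_simp
  have hbound : ∀ (n : ℕ), ∀ y ∈ Metric.ball (0 : ℝ) r, ‖y ^ n / ((n : ℝ) + 1)‖ ≤ r ^ n := by
    intro n y hy
    rw [mem_ball_zero_iff, Real.norm_eq_abs] at hy
    rw [norm_div, norm_pow, Real.norm_eq_abs, norm_of_nonneg (by positivity)]
    calc |y| ^ n / ((n : ℝ) + 1) ≤ |y| ^ n := div_le_self (by positivity) (by simp)
      _ ≤ r ^ n := by gcongr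
  have hderiv := hasDerivAt_tsum_of_isPreconnected (summable_geometric_of_lt_one
    (by positivity) hr1) Metric.isOpen_ball (convex_ball (0 : ℝ) r).isPreconnected
    (fun n y _ => hterm n y) hbound (Metric.mem_ball_self (by positivity)) (by simp)
    (mem_ball_zero_iff.mpr hr)
  have hsum : HasSum (fun n : ℕ => x ^ n / ((n : ℝ) + 1)) (-log (1 - x) / x) :=
    ((hasSum_pow_div_log_of_abs_lt_one hx).div_const x).congr_fun fun n => by
      field_simp
      ring
  rw [← hsum.tsum_eq]
  exact hderiv

lemma hasDerivAt_Li2_add_Li2_one_sub {x : ℝ} (hx : x ∈ Ioo (0 : ℝ) 1) :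
    HasDerivAt (fun z => Li2 z + Li2 (1 - z) + log z * log (1 - z)) 0 x := by
  obtain ⟨hx0, hx1⟩ := hx
  have h1x : 0 < 1 - x := by linarith
  have hsub : HasDerivAt (fun z : ℝ => 1 - z) (-1) x := (hasDerivAt_id x).const_sub 1
  have hLi2 := hasDerivAt_Li2 (by rw [abs_of_pos hx0]; exact hx1) hx0.ne'
  have hLi2' := (hasDerivAt_Li2 (x := 1 - x) (by rw [abs_of_pos h1x]; linarith)
    h1x.ne').comp x hsub
  have hlog := (hasDerivAt_log hx0.ne').mul ((hasDerivAt_log h1x.ne').comp x hsub)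
  refine ((hLi2.add hLi2').add hlog).congr_deriv ?_
  simp only [Function.comp_apply, sub_sub_cancel]
  field_simp
  ring

lemma tendsto_log_mul_log_one_sub_nhdsGT_zero :
    Tendsto (fun z => log z * log (1 - z)) (𝓝[>] 0) (𝓝 0) := by
  have hzlog : Tendsto (fun z => 2 * ‖z * log z‖) (𝓝[>] 0) (𝓝 0) := by
    simpa using ((continuous_mul_log.tendsto 0).norm.const_mul 2).mono_left nhdsWithin_le_nhds
  refine squeeze_zero_norm' ?_ hzlog
  filter_upwards [Ioo_mem_nhdsGT (by norm_num : (0 : ℝ) < 1 / 2)] with z ⟨hz0, hz⟩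
  have hlog : |log (1 - z)| ≤ 2 * z := by
    have h := abs_log_sub_add_sum_range_le (x := z) (by rw [abs_of_pos hz0]; linarith) 0
    rw [abs_of_pos hz0] at h
    simp only [Finset.range_zero, Finset.sum_empty, zero_add, pow_one] at h
    calc |log (1 - z)| ≤ z / (1 - z) := h
      _ ≤ 2 * z := by rw [div_le_iff₀ (by linarith)]; nlinarith
  rw [norm_mul, norm_mul, Real.norm_eq_abs, Real.norm_eq_abs, Real.norm_eq_abs,
    abs_of_pos hz0]
  nlinarith [abs_nonneg (log z), abs_nonneg (log (1 - z))]

theorem Li2_add_Li2_one_sub {x : ℝ} (hx : x ∈ Ioo (0 : ℝ) 1) :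
    Li2 x + Li2 (1 - x) + log x * log (1 - x) = π ^ 2 / 6 := by
  set R : ℝ → ℝ := fun z => Li2 z + Li2 (1 - z) + log z * log (1 - z)
  have hconst : ∀ z ∈ Ioo (0 : ℝ) 1, R z = R x := fun z hz =>
    isOpen_Ioo.is_const_of_deriv_eq_zero isPreconnected_Ioo
      (fun y hy => (hasDerivAt_Li2_add_Li2_one_sub hy).differentiableAt.differentiableWithinAt)
      (fun y hy => (hasDerivAt_Li2_add_Li2_one_sub hy).deriv) hz hx
  have hcont : ContinuousOn (fun z => Li2 z + Li2 (1 - z)) (Icc 0 1) :=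
    (continuousOn_Li2.mono (Icc_subset_Icc (by norm_num) le_rfl)).add
      (continuousOn_Li2.comp (by fun_prop) fun z hz => ⟨by linarith [hz.2], by linarith [hz.1]⟩)
  have hLi2 : Tendsto (fun z => Li2 z + Li2 (1 - z)) (𝓝[>] 0) (𝓝 (π ^ 2 / 6)) := by
    have := (hcont 0 ⟨le_rfl, zero_le_one⟩).tendsto.mono_left
      (nhdsWithin_le_of_mem (Icc_mem_nhdsGT zero_lt_one))
    rwa [sub_zero, Li2_zero, Li2_one, zero_add] at this
  have hR : Tendsto R (𝓝[>] 0) (𝓝 (π ^ 2 / 6)) := by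
    simpa using hLi2.add tendsto_log_mul_log_one_sub_nhdsGT_zero
  refine tendsto_nhds_unique (tendsto_const_nhds.congr' ?_) hR
  filter_upwards [Ioo_mem_nhdsGT zero_lt_one] with z hz
  exact (hconst z hz).symm

lemma Ψ_of_lt_one {a : ℝ} (h : a < 1) :
    Ψ a = -Li2 a + (1 - a) * log (a⁻¹ - 1) + log a - (1 / 2) * (log a) ^ 2 + π ^ 2 / 6 :=
  if_pos h

lemma Ψ_one : Ψ 1 = 0 := by simp [Ψ]

lemma Ψ_of_one_lt {a : ℝ} (h : 1 < a) :
    Ψ a = Li2 a⁻¹ - (a - 1) * log (1 - a⁻¹) + log a - π ^ 2 / 6 := by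
  rw [Ψ, if_neg h.not_gt, if_neg h.ne']

lemma log_inv_sub_one {a : ℝ} (ha₀ : a ≠ 0) (ha₁ : a ≠ 1) :
    log (a⁻¹ - 1) = log (1 - a) - log a := by
  rw [← log_div (sub_ne_zero.mpr ha₁.symm) ha₀, sub_div, div_self ha₀, one_div]

lemma Ψ_add_Ψ_inv {a : ℝ} (ha : a ∈ Ioo (0 : ℝ) 1) :
    Ψ a + Ψ a⁻¹ = (1 - a) * (log (1 - a) - log a) - (a⁻¹ - 1) * log (1 - a) - log a ^ 2 / 2 := by
  rw [Ψ_of_lt_one ha.2, Ψ_of_one_lt (one_lt_inv₀ ha.1 |>.mpr ha.2), inv_inv,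
    log_inv_sub_one ha.1.ne' ha.2.ne, log_inv]
  ring

lemma Ψ_add_Ψ_one_sub {a : ℝ} (ha : a ∈ Ioo (0 : ℝ) 1) :
    Ψ a + Ψ (1 - a) = (1 - 2 * a) * (log (1 - a) - log a) + log a + log (1 - a)
      - (log a - log (1 - a)) ^ 2 / 2 + π ^ 2 / 6 := by
  have ha' : 1 - a ∈ Ioo (0 : ℝ) 1 := ⟨by linarith [ha.2], by linarith [ha.1]⟩
  have hrefl := Li2_add_Li2_one_sub ha
  rw [Ψ_of_lt_one ha.2, Ψ_of_lt_one ha'.2, log_inv_sub_one ha.1.ne' ha.2.ne,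
    log_inv_sub_one ha'.1.ne' ha'.2.ne, sub_sub_cancel]
  linear_combination -hrefl

lemma F_sub_G_branch_identity {w : ℝ} (hw0 : w ≠ 0) (hw : |w| < 1) :
    F (1 / (1 + |w|)) w - F (1 / 2) w - 1 - (G (1 / (1 + |w|)) w - G (1 / (1 - |w|)) w)
      = -(π ^ 2 / 6) := by
  set s := |w| with hs
  have hs0 : 0 < s := abs_pos.mpr hw0
  have hp : 0 < 1 + s := by linarith
  have hm : 0 < 1 - s := by linarith
  have ha : (1 - s) / (1 + s) ∈ Ioo (0 : ℝ) 1 := ⟨by positivity, by rw [div_lt_one hp]; linarith⟩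
  have hb : (1 + s) / 2 ∈ Ioo (0 : ℝ) 1 := ⟨by positivity, by linarith⟩
  have hΨa := eq_sub_of_add_eq (Ψ_add_Ψ_inv ha)
  have hΨb := eq_sub_of_add_eq (Ψ_add_Ψ_one_sub hb)
  have h1 : 1 / (1 + s) * (1 + s) = 1 := by field_simp
  have h2 : 1 / (1 + s) * (1 - s) = (1 - s) / (1 + s) := by ring
  have h3 : 1 / (1 - s) * (1 + s) = ((1 - s) / (1 + s))⁻¹ := by rw [inv_div]; ring
  have h4 : 1 / 2 * (1 + s) = (1 + s) / 2 := by ring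
  have h5 : 1 / 2 * (1 - s) = 1 - (1 + s) / 2 := by ring
  simp only [F, G, ← hs, h1, h2, h3, h4, h5, Ψ_one, hΨa, hΨb]
  have hla : log ((1 - s) / (1 + s)) = log (1 - s) - log (1 + s) := log_div hm.ne' hp.ne'
  have hla' : log (1 - (1 - s) / (1 + s)) = log 2 + log s - log (1 + s) := by
    rw [show 1 - (1 - s) / (1 + s) = 2 * s / (1 + s) by field_simp; ring,
      log_div (by positivity) hp.ne', log_mul two_ne_zero hs0.ne']
  have hlb : log ((1 + s) / 2) = log (1 + s) - log 2 := log_div hp.ne' two_ne_zero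
  have hlb' : log (1 - (1 + s) / 2) = log (1 - s) - log 2 := by
    rw [show 1 - (1 + s) / 2 = (1 - s) / 2 by ring, log_div hm.ne' two_ne_zero]
  have hl2s : log (2 * s / (1 + s)) = log 2 + log s - log (1 + s) := by
    rw [log_div (by positivity) hp.ne', log_mul two_ne_zero hs0.ne']
  rw [hla, hla', hlb, hlb', hl2s]
  simp only [one_div, log_inv]
  field_simp
  ring

/-- The two middle branches of the piecewise formula for `Φ` agree at
`ξ = 1/(1+|w|)`. -/
theorem stmt10 (w : ℝ) (hw : w ∈ Ioo (-1 : ℝ) 1) (hw0 : w ≠ 0) :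
    1 + 6 / π ^ 2 * (F (1 / (1 + |w|)) w - F (1 / 2) w - 1) =
      6 / π ^ 2 * (G (1 / (1 + |w|)) w - G (1 / (1 - |w|)) w) := by
  have key := F_sub_G_branch_identity hw0 (abs_lt.mpr hw)
  field_simp
  linear_combination 6 * key
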